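/- arXiv:1104.2687 — 3 statements merged into one kernel-verified Lean document; each statement's English description precedes it below -/
import Mathlib

section
/- Let A be an n×n zero-one matrix such that all entries of A^p are positive for some p ≥ 1, let P be a Markov matrix compatible with A, v a stationary probability vector for P, and μ_P the associated two-sided Markov measure on {1,…,n}^ℤ. Then the left shift σ is mixing with respect to μ_P: for all measurable sets B, C ⊆ {1,…,n}^ℤ, lim_{k→∞} μ_P(B ∩ σ^{−k}(C)) = μ_P(B)·μ_P(C). -/
/-!
Since some power of `P` is strictly positive, Doeblin's estimate shows that every column of
`P ^ m` flattens out geometrically fast, and stationarity pins its common value: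
`(P ^ m) i j → v j`.
For two cylinders, `μ (B ∩ σ^[k] ⁻¹' C)` is the product of the two cylinder weights with the
factor `v (first symbol of C)` replaced by `(P ^ gap) (last symbol of B) (first symbol of C)`, so
mixing holds on cylinders. Symmetric cylinders form a π-system generating the product σ-algebra,
and in each variable separately the sets for which mixing holds are closed under complements and
countable disjoint unions (by dominated convergence), which extends mixing to all measurable sets.
-/

open Finset Filter Topology MeasureTheory Matrix

section MatrixPowers

variable {ι : Type*} [Fintype ι] [DecidableEq ι] {P : Matrix ι ι ℝ}

lemma Matrix.pow_apply_pos_iff_of_pos_iff {A B : Matrix ι ι ℝ} (hA : ∀ i j, 0 ≤ A i j)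
    (hB : ∀ i j, 0 ≤ B i j) (hAB : ∀ i j, 0 < A i j ↔ 0 < B i j) (m : ℕ) (i j : ι) :
    0 < (A ^ m) i j ↔ 0 < (B ^ m) i j := by
  have hquiver : toQuiver A = toQuiver B := by
    simp only [toQuiver, hAB]
  rw [pow_apply_pos_iff_nonempty_path hA, pow_apply_pos_iff_nonempty_path hB, hquiver]

lemma Matrix.mulVec_mem_Icc_of_le_apply (hP : P ∈ rowStochastic ℝ ι) {δ : ℝ}
    (hδ : ∀ i j, δ ≤ P i j) {x : ι → ℝ} {lo hi : ℝ} (hx : ∀ k, x k ∈ Set.Icc lo hi) (k i : ι) :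
    (P *ᵥ x) i ∈ Set.Icc (lo + δ * (x k - lo)) (hi - δ * (hi - x k)) := by
  have hterm : ∀ {f : ι → ℝ}, (∀ l, 0 ≤ f l) → δ * f k ≤ ∑ l, P i l * f l := fun hf =>
    (mul_le_mul_of_nonneg_right (hδ i k) (hf k)).trans <| single_le_sum
      (f := fun l => P i l * _) (fun l _ => mul_nonneg (nonneg_of_mem_rowStochastic hP) (hf l))
      (mem_univ k)
  have hlo := hterm (f := fun l => x l - lo) fun l => sub_nonneg.2 (hx l).1
  have hhi := hterm (f := fun l => hi - x l) fun l => sub_nonneg.2 (hx l).2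
  simp only [mul_sub, sum_sub_distrib, ← sum_mul, sum_row_of_mem_rowStochastic hP i,
    one_mul] at hlo hhi
  simp only [mulVec, dotProduct, Set.mem_Icc]
  constructor <;> linarith

lemma Matrix.exists_pow_mulVec_mem_Icc [Nonempty ι] (hP : P ∈ rowStochastic ℝ ι) {δ : ℝ}
    (hδ : ∀ i j, δ ≤ P i j) {x : ι → ℝ} {lo hi : ℝ} (hx : ∀ k, x k ∈ Set.Icc lo hi) (q : ℕ) :
    ∃ a, ∀ i, (P ^ q *ᵥ x) i ∈ Set.Icc a (a + (1 - δ) ^ q * (hi - lo)) := by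
  induction q with
  | zero => exact ⟨lo, fun i => by simpa using hx i⟩
  | succ q ih =>
    obtain ⟨a, ha⟩ := ih
    let k : ι := Classical.arbitrary ι
    refine ⟨a + δ * ((P ^ q *ᵥ x) k - a), fun i => ?_⟩
    have h := mulVec_mem_Icc_of_le_apply hP hδ ha k i
    rw [pow_succ' P q, ← mulVec_mulVec, pow_succ]
    exact ⟨h.1, by linarith [h.2]⟩

lemma Matrix.vecMul_pow_eq_self {v : ι → ℝ} (hv : v ᵥ* P = v) (m : ℕ) : v ᵥ* P ^ m = v := by
  induction m with
  | zero => simp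
  | succ m ih => rw [pow_succ, ← vecMul_vecMul, ih, hv]

lemma Matrix.abs_pow_apply_sub_le (hPs : P ∈ rowStochastic ℝ ι) {p : ℕ} {δ : ℝ}
    (hδ : ∀ i j, δ ≤ (P ^ p) i j) {v : ι → ℝ} (hv0 : ∀ i, 0 ≤ v i) (hv1 : ∑ i, v i = 1)
    (hvP : v ᵥ* P = v) (m : ℕ) (i j : ι) : |(P ^ m) i j - v j| ≤ (1 - δ) ^ (m / p) := by
  have : Nonempty ι := ⟨i⟩
  have hcol : ∀ l, (P ^ (m % p)) l j ∈ Set.Icc (0 : ℝ) 1 := fun l =>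
    ⟨nonneg_of_mem_rowStochastic (pow_mem hPs _), le_one_of_mem_rowStochastic (pow_mem hPs _)⟩
  obtain ⟨a, ha⟩ := exists_pow_mulVec_mem_Icc (pow_mem hPs p) hδ hcol (m / p)
  have hPm : (P ^ p) ^ (m / p) * P ^ (m % p) = P ^ m := by
    rw [← pow_mul, ← pow_add, Nat.div_add_mod]
  have hm : ∀ l, (P ^ m) l j ∈ Set.Icc a (a + (1 - δ) ^ (m / p)) := fun l => by
    have h := ha l
    rw [sub_zero, mul_one] at h
    rw [← hPm]
    exact h
  have hv : v j = ∑ l, v l * (P ^ m) l j := (congrFun (vecMul_pow_eq_self hvP m) j).symm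
  have hlo : a ≤ v j := calc
    a = ∑ l, v l * a := by rw [← sum_mul, hv1, one_mul]
    _ ≤ v j := hv ▸ sum_le_sum fun l _ => mul_le_mul_of_nonneg_left (hm l).1 (hv0 l)
  have hhi : v j ≤ a + (1 - δ) ^ (m / p) := calc
    v j ≤ ∑ l, v l * (a + (1 - δ) ^ (m / p)) :=
      hv ▸ sum_le_sum fun l _ => mul_le_mul_of_nonneg_left (hm l).2 (hv0 l)
    _ = _ := by rw [← sum_mul, hv1, one_mul]
  rw [abs_sub_le_iff]
  constructor <;> linarith [(hm i).1, (hm i).2]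

theorem Matrix.IsPrimitive.tendsto_pow_apply (hP : IsPrimitive P)
    (hPs : P ∈ rowStochastic ℝ ι) {v : ι → ℝ} (hv0 : ∀ i, 0 ≤ v i) (hv1 : ∑ i, v i = 1)
    (hvP : v ᵥ* P = v) (i j : ι) : Tendsto (fun m => (P ^ m) i j) atTop (𝓝 (v j)) := by
  obtain ⟨p, hp, hpos⟩ := hP.exists_pos_pow
  obtain ⟨⟨i₀, j₀⟩, -, hmin⟩ :=
    univ.exists_min_image (fun q : ι × ι => (P ^ p) q.1 q.2) ⟨(i, j), mem_univ _⟩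
  have hδ0 : 0 < (P ^ p) i₀ j₀ := hpos i₀ j₀
  have hδ1 : (P ^ p) i₀ j₀ ≤ 1 := le_one_of_mem_rowStochastic (pow_mem hPs p)
  have hlim : Tendsto (fun m => (1 - (P ^ p) i₀ j₀) ^ (m / p)) atTop (𝓝 0) :=
    (tendsto_pow_atTop_nhds_zero_of_lt_one (by linarith) (by linarith)).comp
      (Nat.tendsto_div_const_atTop hp.ne')
  exact tendsto_sub_nhds_zero_iff.1 <| squeeze_zero_norm
    (fun m => abs_pow_apply_sub_le hPs (fun i j => hmin (i, j) (mem_univ _)) hv0 hv1 hvP m i j) hlim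

end MatrixPowers

lemma ENNReal.tendsto_tsum_of_dominated_convergence {α β : Type*} {l : Filter α}
    {f : α → β → ENNReal} {g bound : β → ENNReal} (h_sum : ∑' k, bound k ≠ ⊤)
    (hfg : ∀ k, Tendsto (f · k) l (𝓝 (g k))) (h_bound : ∀ n k, f n k ≤ bound k) :
    Tendsto (fun n => ∑' k, f n k) l (𝓝 (∑' k, g k)) := by
  rcases l.eq_or_neBot with rfl | _
  · exact tendsto_bot
  have hg : ∀ k, g k ≤ bound k := fun k => le_of_tendsto' (hfg k) fun n => h_bound n k
  have hbound_ne : ∀ k, bound k ≠ ⊤ := fun k => ne_top_of_le_ne_top h_sum (ENNReal.le_tsum k)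
  have hf_ne : ∀ n k, f n k ≠ ⊤ := fun n k => ne_top_of_le_ne_top (hbound_ne k) (h_bound n k)
  have hg_ne : ∀ k, g k ≠ ⊤ := fun k => ne_top_of_le_ne_top (hbound_ne k) (hg k)
  rw [← ENNReal.tendsto_toReal_iff
    (fun n => ne_top_of_le_ne_top h_sum (ENNReal.tsum_le_tsum (h_bound n)))
    (ne_top_of_le_ne_top h_sum (ENNReal.tsum_le_tsum hg))]
  simp only [ENNReal.tsum_toReal_eq (hf_ne _), ENNReal.tsum_toReal_eq hg_ne]
  refine _root_.tendsto_tsum_of_dominated_convergence (ENNReal.summable_toReal h_sum)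
    (fun k => (ENNReal.tendsto_toReal (hg_ne k)).comp (hfg k)) (.of_forall fun n k => ?_)
  rw [Real.norm_of_nonneg ENNReal.toReal_nonneg]
  exact ENNReal.toReal_mono (hbound_ne k) (h_bound n k)

theorem MeasureTheory.tendsto_measure_of_isPiSystem {α β : Type*} [m : MeasurableSpace α]
    {μ ν : Measure α} [IsFiniteMeasure μ] [IsFiniteMeasure ν] {l : Filter β}
    {νs : β → Measure α} (hle : ∀ k, νs k ≤ μ) {S : Set (Set α)} (hgen : m = .generateFrom S)
    (hS : IsPiSystem S) (huniv : Tendsto (fun k => νs k Set.univ) l (𝓝 (ν Set.univ)))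
    (hlim : ∀ s ∈ S, Tendsto (fun k => νs k s) l (𝓝 (ν s))) {s : Set α}
    (hs : MeasurableSet s) : Tendsto (fun k => νs k s) l (𝓝 (ν s)) := by
  have hfin : ∀ k t, νs k t ≠ ⊤ := fun k t => ne_top_of_le_ne_top (measure_ne_top μ t) (hle k t)
  induction s, hs using MeasurableSpace.induction_on_inter hgen hS with
  | empty => simpa using tendsto_const_nhds
  | basic t ht => exact hlim t ht
  | compl t ht iht =>
    simp only [measure_compl ht (hfin _ t), measure_compl ht (measure_ne_top ν t)]
    exact ENNReal.Tendsto.sub huniv iht (.inl (measure_ne_top ν Set.univ))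
  | iUnion f hdisj hf ihf =>
    simp only [measure_iUnion hdisj hf]
    exact ENNReal.tendsto_tsum_of_dominated_convergence
      (by rw [← measure_iUnion hdisj hf]; exact measure_ne_top μ _) ihf fun k i => hle k (f i)

theorem MeasureTheory.MeasurePreserving.tendsto_measure_inter_preimage_iterate
    {α : Type*} [m : MeasurableSpace α] {μ : Measure α} [IsProbabilityMeasure μ] {f : α → α}
    (hf : MeasurePreserving f μ μ) {S : Set (Set α)} (hgen : m = .generateFrom S)
    (hS : IsPiSystem S)
    (hmix : ∀ s ∈ S, ∀ t ∈ S, Tendsto (fun k => μ (s ∩ f^[k] ⁻¹' t)) atTop (𝓝 (μ s * μ t)))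
    {s t : Set α} (hs : MeasurableSet s) (ht : MeasurableSet t) :
    Tendsto (fun k => μ (s ∩ f^[k] ⁻¹' t)) atTop (𝓝 (μ s * μ t)) := by
  have hSm : ∀ s ∈ S, MeasurableSet s := fun s hs =>
    hgen ▸ MeasurableSpace.measurableSet_generateFrom hs
  have hfin : ∀ u, IsFiniteMeasure (μ u • μ) := fun _ => ⟨by simp⟩
  -- In `t` the map `t ↦ μ (s ∩ f^[k] ⁻¹' t)` is the measure `(μ.restrict s).map f^[k]`,
  -- in `s` the map `s ↦ μ (s ∩ f^[k] ⁻¹' t)` is the measure `μ.restrict (f^[k] ⁻¹' t)`.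
  have hright : ∀ s ∈ S, ∀ t, MeasurableSet t →
      Tendsto (fun k => μ (s ∩ f^[k] ⁻¹' t)) atTop (𝓝 (μ s * μ t)) := by
    intro s hs t ht
    have hmap : ∀ k u, MeasurableSet u → (μ.restrict s).map f^[k] u = μ (s ∩ f^[k] ⁻¹' u) :=
      fun k u hu => by
        rw [Measure.map_apply (hf.iterate k).measurable hu,
          Measure.restrict_apply ((hf.iterate k).measurable hu), Set.inter_comm]
    have hle : ∀ k, (μ.restrict s).map f^[k] ≤ μ := fun k => calc
      _ ≤ μ.map f^[k] := Measure.map_mono Measure.restrict_le_self (hf.iterate k).measurable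
      _ = μ := (hf.iterate k).map_eq
    have := tendsto_measure_of_isPiSystem (ν := μ s • μ) (l := atTop) hle hgen hS
      (by simp [hmap _ _ .univ])
      (fun u hu => by simpa [hmap _ _ (hSm u hu)] using hmix s hs u hu) ht
    simpa [hmap _ _ ht] using this
  have := tendsto_measure_of_isPiSystem (ν := μ t • μ) (l := atTop)
    (νs := fun k => μ.restrict (f^[k] ⁻¹' t)) (fun k => Measure.restrict_le_self) hgen hS
    (by simp [(hf.iterate _).measure_preimage ht.nullMeasurableSet])
    (fun u hu => by
      simpa [Measure.restrict_apply (hSm u hu), mul_comm] using hright u hu t ht) hs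
  simpa [Measure.restrict_apply hs, mul_comm] using this

section Cylinders

variable {α : Type*}

def intervalCylinder (a b : ℤ) (w : ℤ → α) : Set (ℤ → α) :=
  {ω | ∀ i, a ≤ i → i ≤ b → ω i = w i}

def leftShift : (ℤ → α) → ℤ → α := fun ω i => ω (i + 1)

lemma measurableSet_intervalCylinder [MeasurableSpace α] [MeasurableSingletonClass α]
    (a b : ℤ) (w : ℤ → α) : MeasurableSet (intervalCylinder a b w) := by
  simp only [intervalCylinder, Set.ofPred_forall]
  exact .iInter fun i => .iInter fun _ => .iInter fun _ =>
    (measurableSet_singleton (w i)).preimage (measurable_pi_apply i)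

lemma measurable_leftShift [MeasurableSpace α] : Measurable (leftShift (α := α)) :=
  measurable_pi_lambda _ fun i => measurable_pi_apply (i + 1)

lemma leftShift_iterate_apply (k : ℕ) (ω : ℤ → α) (i : ℤ) : leftShift^[k] ω i = ω (i + k) := by
  induction k generalizing ω with
  | zero => simp
  | succ k ih =>
    rw [Function.iterate_succ_apply, ih]
    simp only [leftShift, Nat.cast_succ, add_assoc]

lemma preimage_leftShift_iterate_intervalCylinder (k : ℕ) (a b : ℤ) (w : ℤ → α) :
    leftShift^[k] ⁻¹' intervalCylinder a b w =
      intervalCylinder (a + k) (b + k) (fun i => w (i - k)) := by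
  ext ω
  simp only [intervalCylinder, Set.mem_preimage, Set.mem_ofPred_eq, leftShift_iterate_apply]
  refine ⟨fun h i hai hib => ?_, fun h i hai hib => ?_⟩
  · simpa using h (i - k) (by omega) (by omega)
  · simpa using h (i + k) (by omega) (by omega)

lemma intervalCylinder_inter_intervalCylinder_add_one {a b d : ℤ} (hab : a ≤ b + 1) (hbd : b ≤ d)
    (w u : ℤ → α) :
    intervalCylinder a b w ∩ intervalCylinder (b + 1) d u =
      intervalCylinder a d (fun i => if i ≤ b then w i else u i) := by
  ext ω
  simp only [intervalCylinder, Set.mem_inter_iff, Set.mem_ofPred_eq]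
  refine ⟨fun ⟨hw, hu⟩ i hai hid => ?_, fun h => ⟨fun i hai hib => ?_, fun i hbi hid => ?_⟩⟩
  · split_ifs with hib
    exacts [hw i hai hib, hu i (by omega) hid]
  · simpa [hib] using h i hai (by omega)
  · simpa [show ¬i ≤ b by omega] using h i (by omega) hid

lemma iUnion_intervalCylinder_update (a b : ℤ) (w : ℤ → α) :
    ⋃ x, intervalCylinder a (b + 1) (Function.update w (b + 1) x) = intervalCylinder a b w := by
  ext ω
  simp only [intervalCylinder, Set.mem_iUnion, Set.mem_ofPred_eq]
  refine ⟨fun ⟨x, h⟩ i hai hib => ?_, fun h => ⟨ω (b + 1), fun i hai hib => ?_⟩⟩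
  · simpa [show i ≠ b + 1 by omega] using h i hai (by omega)
  · rcases eq_or_ne i (b + 1) with rfl | hi
    · simp
    · simpa [hi] using h i hai (by omega)

lemma pairwise_disjoint_intervalCylinder_update {a b : ℤ} (hab : a ≤ b + 1) (w : ℤ → α) :
    Pairwise (Function.onFun Disjoint
      fun x => intervalCylinder a (b + 1) (Function.update w (b + 1) x)) := by
  intro x y hxy
  refine Set.disjoint_left.2 fun ω hx hy => hxy ?_
  simpa using (hx (b + 1) hab le_rfl).symm.trans (hy (b + 1) hab le_rfl)

def symmCylinders (α : Type*) : Set (Set (ℤ → α)) :=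
  {s | ∃ (N : ℕ) (w : ℤ → α), s = intervalCylinder (-N) N w}

lemma intervalCylinder_subset_of_mem {a b a' b' : ℤ} {w ω : ℤ → α}
    (hω : ω ∈ intervalCylinder a b w) (ha : a' ≤ a) (hb : b ≤ b') :
    intervalCylinder a' b' ω ⊆ intervalCylinder a b w := fun _ hω' i hai hib =>
  (hω' i (ha.trans hai) (hib.trans hb)).trans (hω i hai hib)

lemma intervalCylinder_eq_of_mem {a b : ℤ} {w ω : ℤ → α} (hω : ω ∈ intervalCylinder a b w) :
    intervalCylinder a b ω = intervalCylinder a b w :=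
  (intervalCylinder_subset_of_mem hω le_rfl le_rfl).antisymm fun _ hω' i hai hib =>
    (hω' i hai hib).trans (hω i hai hib).symm

lemma isPiSystem_symmCylinders : IsPiSystem (symmCylinders α) := by
  rintro _ ⟨N, w, rfl⟩ _ ⟨M, u, rfl⟩ ⟨ω, hωw, hωu⟩
  rcases le_total N M with h | h
  · refine ⟨M, u, Set.inter_eq_self_of_subset_right ?_⟩
    rw [← intervalCylinder_eq_of_mem hωu]
    exact intervalCylinder_subset_of_mem hωw (by omega) (by omega)
  · refine ⟨N, w, Set.inter_eq_self_of_subset_left ?_⟩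
    rw [← intervalCylinder_eq_of_mem hωw]
    exact intervalCylinder_subset_of_mem hωu (by omega) (by omega)

lemma intervalCylinder_eq_preimage_restrict (a b : ℤ) (w : ℤ → α) :
    intervalCylinder a b w = (Icc a b).restrict (π := fun _ => α) ⁻¹' {(Icc a b).restrict w} := by
  ext ω
  simp [intervalCylinder, funext_iff, and_imp]

lemma generateFrom_symmCylinders [MeasurableSpace α] [MeasurableSingletonClass α]
    [Countable α] : MeasurableSpace.generateFrom (symmCylinders α) = MeasurableSpace.pi := by
  refine le_antisymm (MeasurableSpace.generateFrom_le ?_) (iSup_le fun i => ?_)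
  · rintro _ ⟨N, w, rfl⟩
    exact measurableSet_intervalCylinder _ _ w
  rw [← measurable_iff_comap_le]
  refine @measurable_to_countable' α _ _ _ (.generateFrom (symmCylinders α)) _ fun x => ?_
  set N := i.natAbs
  have hfiber : (fun ω : ℤ → α => ω i) ⁻¹' {x} =
      ⋃₀ ((intervalCylinder (-N) N) '' {ω | ω i = x}) := by
    ext ω
    simp only [Set.mem_preimage, Set.mem_singleton_iff, Set.mem_sUnion, Set.mem_image]
    refine ⟨fun h => ⟨_, ⟨ω, h, rfl⟩, fun j _ _ => rfl⟩, ?_⟩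
    rintro ⟨_, ⟨ω', h, rfl⟩, hω⟩
    rw [hω i (by omega) (by omega), h]
  have hcount : (intervalCylinder (-N) N '' {ω | ω i = x}).Countable := by
    refine (Set.countable_range fun g : Icc (-N : ℤ) N → α =>
      (Icc (-N : ℤ) N).restrict (π := fun _ => α) ⁻¹' {g}).mono ?_
    rintro _ ⟨ω, -, rfl⟩
    exact ⟨_, (intervalCylinder_eq_preimage_restrict _ _ ω).symm⟩
  rw [hfiber]
  exact .sUnion hcount fun _ ⟨ω, _, hω⟩ =>
    MeasurableSpace.measurableSet_generateFrom ⟨N, ω, hω.symm⟩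

end Cylinders

section Markov

variable {ι : Type*}

noncomputable def pathWeight (P : Matrix ι ι ℝ) (a b : ℤ) (w : ℤ → ι) : ℝ :=
  ∏ i ∈ Ico a b, P (w i) (w (i + 1))

def IsMarkovMeasure [MeasurableSpace ι] (P : Matrix ι ι ℝ) (v : ι → ℝ) (μ : Measure (ℤ → ι)) :
    Prop :=
  ∀ a b, a ≤ b → ∀ w, μ (intervalCylinder a b w) = ENNReal.ofReal (v (w a) * pathWeight P a b w)

variable {P : Matrix ι ι ℝ}

lemma pathWeight_nonneg (hP : ∀ i j, 0 ≤ P i j) (a b : ℤ) (w : ℤ → ι) : 0 ≤ pathWeight P a b w :=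
  prod_nonneg fun _ _ => hP _ _

lemma pathWeight_mul_pathWeight {a b c : ℤ} (hab : a ≤ b) (hbc : b ≤ c) (w : ℤ → ι) :
    pathWeight P a b w * pathWeight P b c w = pathWeight P a c w := by
  rw [pathWeight, pathWeight, pathWeight, ← Ico_union_Ico_eq_Ico hab hbc,
    prod_union (Ico_disjoint_Ico_consecutive a b c)]

lemma pathWeight_add_one (b : ℤ) (w : ℤ → ι) : pathWeight P b (b + 1) w = P (w b) (w (b + 1)) := by
  rw [pathWeight, Ico_add_one_right_eq_Icc, Icc_self, prod_singleton]

lemma pathWeight_congr {a b : ℤ} {w w' : ℤ → ι} (h : ∀ i, a ≤ i → i ≤ b → w i = w' i) :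
    pathWeight P a b w = pathWeight P a b w' :=
  prod_congr rfl fun i hi => by
    rw [mem_Ico] at hi
    rw [h i hi.1 hi.2.le, h (i + 1) (by omega) (by omega)]

lemma pathWeight_comp_sub (a b k : ℤ) (w : ℤ → ι) :
    pathWeight P (a + k) (b + k) (fun i => w (i - k)) = pathWeight P a b w := by
  simp only [pathWeight, ← prod_Ico_add', add_right_comm _ k (1 : ℤ), add_sub_cancel_right]

lemma pathWeight_update_add_one {a b : ℤ} (hab : a ≤ b) (w : ℤ → ι) (x : ι) :
    pathWeight P a (b + 1) (Function.update w (b + 1) x) = pathWeight P a b w * P (w b) x := by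
  rw [← pathWeight_mul_pathWeight hab (by omega), pathWeight_add_one,
    pathWeight_congr fun i _ hi => Function.update_of_ne (by omega) x w,
    Function.update_self, Function.update_of_ne (by omega)]

variable [Fintype ι] [DecidableEq ι] [MeasurableSpace ι] [MeasurableSingletonClass ι]
  {v : ι → ℝ} {μ : Measure (ℤ → ι)}

lemma IsMarkovMeasure.measure_inter_intervalCylinder (hμ : IsMarkovMeasure P v μ)
    (hP : ∀ i j, 0 ≤ P i j) (hv : ∀ i, 0 ≤ v i) {a b c d : ℤ} (hab : a ≤ b) (hbc : b < c)
    (hcd : c ≤ d) (w u : ℤ → ι) :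
    μ (intervalCylinder a b w ∩ intervalCylinder c d u) = ENNReal.ofReal
      (v (w a) * pathWeight P a b w * (P ^ (c - b).toNat) (w b) (u c) * pathWeight P c d u) := by
  obtain ⟨m, hm⟩ : ∃ m : ℕ, (c - b).toNat = m + 1 := ⟨(c - b).toNat - 1, by omega⟩
  induction m generalizing b w with
  | zero =>
    obtain rfl : c = b + 1 := by omega
    rw [hm, pow_one, intervalCylinder_inter_intervalCylinder_add_one (by omega) (by omega),
      hμ a d (by omega), ← pathWeight_mul_pathWeight hab (by omega),
      ← pathWeight_mul_pathWeight (a := b) (b := b + 1) (by omega) hcd, pathWeight_add_one,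
      pathWeight_congr (b := b) fun i _ hi => if_pos hi,
      pathWeight_congr (a := b + 1) fun i hi _ => if_neg (by omega)]
    simp only [hab, le_refl, if_true, show ¬b + 1 ≤ b by omega, if_false, mul_assoc]
  | succ m ih =>
    have hterm : ∀ x, μ (intervalCylinder a (b + 1) (Function.update w (b + 1) x) ∩
        intervalCylinder c d u) = ENNReal.ofReal (v (w a) * pathWeight P a b w *
          (P (w b) x * (P ^ (m + 1)) x (u c)) * pathWeight P c d u) := by
      intro x
      rw [ih (by omega) (by omega) _ (by omega), pathWeight_update_add_one hab,
        show (c - (b + 1)).toNat = m + 1 by omega, Function.update_self,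
        Function.update_of_ne (by omega)]
      congr 1
      ring
    have hnonneg : ∀ x, 0 ≤ v (w a) * pathWeight P a b w *
        (P (w b) x * (P ^ (m + 1)) x (u c)) * pathWeight P c d u := fun x =>
      mul_nonneg (mul_nonneg (mul_nonneg (hv _) (pathWeight_nonneg hP a b w))
        (mul_nonneg (hP _ _) (Matrix.pow_apply_nonneg hP _ _ _))) (pathWeight_nonneg hP c d u)
    rw [← iUnion_intervalCylinder_update a b w, Set.iUnion_inter,
      measure_iUnion (fun x y hxy => ((pairwise_disjoint_intervalCylinder_update (by omega) w)
        hxy).mono Set.inter_subset_left Set.inter_subset_left)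
        fun _ => (measurableSet_intervalCylinder _ _ _).inter
          (measurableSet_intervalCylinder _ _ _),
      tsum_fintype, sum_congr rfl fun x _ => hterm x,
      ← ENNReal.ofReal_sum_of_nonneg fun x _ => hnonneg x,
      ← sum_mul, ← mul_sum, hm, pow_succ' P (m + 1), Matrix.mul_apply]

lemma IsMarkovMeasure.tendsto_measure_inter_preimage_intervalCylinder
    (hμ : IsMarkovMeasure P v μ) (hP : ∀ i j, 0 ≤ P i j) (hv : ∀ i, 0 ≤ v i)
    (hlim : ∀ i j, Tendsto (fun m => (P ^ m) i j) atTop (𝓝 (v j))) {a b c d : ℤ} (hab : a ≤ b)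
    (hcd : c ≤ d) (w u : ℤ → ι) :
    Tendsto (fun k => μ (intervalCylinder a b w ∩ leftShift^[k] ⁻¹' intervalCylinder c d u))
      atTop (𝓝 (μ (intervalCylinder a b w) * μ (intervalCylinder c d u))) := by
  have hev : (fun k : ℕ => ENNReal.ofReal (v (w a) * pathWeight P a b w *
      (P ^ (c + k - b).toNat) (w b) (u c) * pathWeight P c d u)) =ᶠ[atTop]
      fun k => μ (intervalCylinder a b w ∩ leftShift^[k] ⁻¹' intervalCylinder c d u) := by
    filter_upwards [eventually_gt_atTop (b - c).toNat] with k hk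
    rw [preimage_leftShift_iterate_intervalCylinder,
      hμ.measure_inter_intervalCylinder hP hv hab (by omega) (by omega), pathWeight_comp_sub,
      add_sub_cancel_right]
  have hpow : Tendsto (fun k : ℕ => (P ^ (c + k - b).toNat) (w b) (u c)) atTop (𝓝 (v (u c))) :=
    (hlim _ _).comp (tendsto_atTop_atTop.2 fun q => ⟨q + (b - c).toNat, fun k hk => by omega⟩)
  rw [hμ a b hab w, hμ c d hcd u,
    ← ENNReal.ofReal_mul (mul_nonneg (hv _) (pathWeight_nonneg hP a b w)), ← mul_assoc]
  exact (ENNReal.tendsto_ofReal ((hpow.const_mul _).mul_const _)).congr' hev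

end Markov

theorem stmt1_general (n : ℕ)
    (A P : Matrix (Fin n) (Fin n) ℝ)
    (hA : ∀ i j, A i j = 0 ∨ A i j = 1)
    (p : ℕ) (hp : 1 ≤ p) (hAp : ∀ i j, 0 < (A ^ p) i j)
    (hPnonneg : ∀ i j, 0 ≤ P i j)
    (hProw : ∀ i, ∑ j, P i j = 1)
    (hPA : ∀ i j, 0 < P i j ↔ A i j = 1)
    (v : Fin n → ℝ)
    (hvpos : ∀ i, 0 < v i)
    (hvsum : ∑ i, v i = 1)
    (hvstat : ∀ j, ∑ i, v i * P i j = v j)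
    (μ : Measure (ℤ → Fin n)) (hprob : IsProbabilityMeasure μ)
    (hinv : ∀ s : Set (ℤ → Fin n), MeasurableSet s →
      μ ((fun ω (i : ℤ) => ω (i + 1)) ⁻¹' s) = μ s)
    (hcyl : ∀ n₂ n₁ : ℤ, n₂ ≤ n₁ → ∀ w : ℤ → Fin n,
      μ {ω | ∀ i : ℤ, n₂ ≤ i → i ≤ n₁ → ω i = w i} =
        ENNReal.ofReal (v (w n₂) * ∏ i ∈ Finset.Ico n₂ n₁, P (w i) (w (i + 1)))) :
    ∀ B C : Set (ℤ → Fin n), MeasurableSet B → MeasurableSet C →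
      Filter.Tendsto (fun k : ℕ => μ (B ∩ (fun ω (i : ℤ) => ω (i + 1))^[k] ⁻¹' C))
        Filter.atTop (nhds (μ B * μ C)) := by
  intro B C hB hC
  have hA0 : ∀ i j, 0 ≤ A i j := fun i j => by rcases hA i j with h | h <;> simp [h]
  have hAP : ∀ i j, 0 < A i j ↔ 0 < P i j := fun i j => by
    rw [hPA]; rcases hA i j with h | h <;> simp [h]
  have hprim : P.IsPrimitive := ⟨hPnonneg, p, hp, fun i j =>
    (pow_apply_pos_iff_of_pos_iff hA0 hPnonneg hAP p i j).1 (hAp i j)⟩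
  have hv0 : ∀ i, 0 ≤ v i := fun i => (hvpos i).le
  have hlim := hprim.tendsto_pow_apply (mem_rowStochastic_iff_sum.2 ⟨hPnonneg, hProw⟩) hv0 hvsum
    (funext hvstat)
  have hshift : MeasurePreserving leftShift μ μ := ⟨measurable_leftShift, Measure.ext fun s hs => by
    rw [Measure.map_apply measurable_leftShift hs]; exact hinv s hs⟩
  have hμ : IsMarkovMeasure P v μ := hcyl
  refine hshift.tendsto_measure_inter_preimage_iterate generateFrom_symmCylinders.symm
    isPiSystem_symmCylinders ?_ hB hC
  rintro _ ⟨N, w, rfl⟩ _ ⟨M, u, rfl⟩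
  exact hμ.tendsto_measure_inter_preimage_intervalCylinder hPnonneg hv0 hlim (by omega)
    (by omega) w u

/-- if all entries of `A ^ p` are positive for some `p ≥ 1`, then the left
shift is mixing with respect to the two-sided Markov measure `μ_P`. -/
theorem stmt1 (n : ℕ) (hn : 1 ≤ n)
    (A P : Matrix (Fin n) (Fin n) ℝ)
    (hA : ∀ i j, A i j = 0 ∨ A i j = 1)
    (p : ℕ) (hp : 1 ≤ p) (hAp : ∀ i j, 0 < (A ^ p) i j)
    (hPnonneg : ∀ i j, 0 ≤ P i j)
    (hProw : ∀ i, ∑ j, P i j = 1)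
    (hPA : ∀ i j, 0 < P i j ↔ A i j = 1)
    (v : Fin n → ℝ)
    (hvpos : ∀ i, 0 < v i)
    (hvsum : ∑ i, v i = 1)
    (hvstat : ∀ j, ∑ i, v i * P i j = v j)
    (μ : Measure (ℤ → Fin n)) (hprob : IsProbabilityMeasure μ)
    (hinv : ∀ s : Set (ℤ → Fin n), MeasurableSet s →
      μ ((fun ω (i : ℤ) => ω (i + 1)) ⁻¹' s) = μ s)
    (hcyl : ∀ n₂ n₁ : ℤ, n₂ ≤ n₁ → ∀ w : ℤ → Fin n,
      μ {ω | ∀ i : ℤ, n₂ ≤ i → i ≤ n₁ → ω i = w i} =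
        ENNReal.ofReal (v (w n₂) * ∏ i ∈ Finset.Ico n₂ n₁, P (w i) (w (i + 1)))) :
    ∀ B C : Set (ℤ → Fin n), MeasurableSet B → MeasurableSet C →
      Filter.Tendsto (fun k : ℕ => μ (B ∩ (fun ω (i : ℤ) => ω (i + 1))^[k] ⁻¹' C))
        Filter.atTop (nhds (μ B * μ C)) :=
  stmt1_general n A P hA p hp hAp hPnonneg hProw hPA v hvpos hvsum hvstat μ hprob hinv hcyl
end

section
/- Let 0 < θ < 1, c > 0, and let G : {1,…,n}^ℤ → ℝ satisfy the Hölder-type condition: |G(ω) − G(ω′)| ≤ c·θ^m whenever ω_i = ω′_i for all integers i with |i| < m. Then there exists a constant K > 0 such that for every N ∈ ℕ and all ω, ω′ ∈ {1,…,n}^ℤ with ω_i = ω′_i for all i ≤ −1, one has |∑_{k=1}^{N} G(σ^{−k}(ω)) − ∑_{k=1}^{N} G(σ^{−k}(ω′))| < K, where σ^{−k} denotes the k-th iterate of the inverse of the left shift. -/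
/-! Since `ω` and `ω'` agree on the negative coordinates, their images under `σ⁻ᵏ` agree on all
coordinates `i < k`, so the `k`-th terms of the two Birkhoff sums differ by at most `c θᵏ`; the
geometric series bounds the difference of the sums by `c θ / (1 - θ) < c / (1 - θ)`. -/

open Finset

lemma iterate_shiftRight_apply {α : Type*} (k : ℕ) (ω : ℤ → α) (i : ℤ) :
    ((fun ν (i : ℤ) => ν (i - 1))^[k] ω) i = ω (i - k) := by
  induction k generalizing i with
  | zero => simp
  | succ k ih =>
    rw [Function.iterate_succ_apply', ih]
    congr 1
    push_cast
    ring

lemma iterate_shiftRight_eq_of_lt {α : Type*} {ω ω' : ℤ → α}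
    (hω : ∀ i : ℤ, i ≤ -1 → ω i = ω' i) (k : ℕ) {i : ℤ} (hi : i < k) :
    ((fun ν (i : ℤ) => ν (i - 1))^[k] ω) i = ((fun ν (i : ℤ) => ν (i - 1))^[k] ω') i := by
  rw [iterate_shiftRight_apply, iterate_shiftRight_apply]
  exact hω _ (by omega)

lemma abs_sum_Icc_sub_sum_Icc_le_of_abs_sub_le_geometric {K : Type*} [Field K] [LinearOrder K]
    [IsStrictOrderedRing K] {a b : ℕ → K} {c θ : K} (hθ0 : 0 ≤ θ) (hθ1 : θ < 1)
    (hab : ∀ k, |a k - b k| ≤ c * θ ^ k) (N : ℕ) :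
    |∑ k ∈ Icc 1 N, a k - ∑ k ∈ Icc 1 N, b k| ≤ c * θ / (1 - θ) := by
  have hc : 0 ≤ c := by simpa using (abs_nonneg _).trans (hab 0)
  rw [← sum_sub_distrib, ← Ico_add_one_right_eq_Icc]
  calc |∑ k ∈ Ico 1 (N + 1), (a k - b k)|
      ≤ ∑ k ∈ Ico 1 (N + 1), |a k - b k| := abs_sum_le_sum_abs _ _
    _ ≤ ∑ k ∈ Ico 1 (N + 1), c * θ ^ k := sum_le_sum fun k _ => hab k
    _ = c * ∑ k ∈ Ico 1 (N + 1), θ ^ k := (mul_sum _ _ _).symm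
    _ ≤ c * (θ ^ 1 / (1 - θ)) := by gcongr; exact geom_sum_Ico_le_of_lt_one hθ0 hθ1
    _ = c * θ / (1 - θ) := by rw [pow_one, mul_div_assoc]

theorem stmt4_general (n : ℕ) (θ c : ℝ) (hθ0 : 0 < θ) (hθ1 : θ < 1) (hc : 0 < c)
    (G : (ℤ → Fin n) → ℝ)
    (hG : ∀ m : ℕ, ∀ ω ω' : ℤ → Fin n,
      (∀ i : ℤ, |i| < (m : ℤ) → ω i = ω' i) → |G ω - G ω'| ≤ c * θ ^ m) :
    ∃ K : ℝ, 0 < K ∧ ∀ N : ℕ, ∀ ω ω' : ℤ → Fin n,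
      (∀ i : ℤ, i ≤ -1 → ω i = ω' i) →
      |(∑ k ∈ Finset.Icc 1 N, G ((fun ν (i : ℤ) => ν (i - 1))^[k] ω)) -
        ∑ k ∈ Finset.Icc 1 N, G ((fun ν (i : ℤ) => ν (i - 1))^[k] ω')| < K := by
  have h1θ : 0 < 1 - θ := sub_pos.mpr hθ1
  refine ⟨c / (1 - θ), by positivity, fun N ω ω' hω => ?_⟩
  have hterm : ∀ k : ℕ, |G ((fun ν (i : ℤ) => ν (i - 1))^[k] ω) -
      G ((fun ν (i : ℤ) => ν (i - 1))^[k] ω')| ≤ c * θ ^ k := fun k =>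
    hG k _ _ fun i hi => iterate_shiftRight_eq_of_lt hω k (lt_of_abs_lt hi)
  calc _ ≤ c * θ / (1 - θ) :=
        abs_sum_Icc_sub_sum_Icc_le_of_abs_sub_le_geometric hθ0.le hθ1 hterm N
    _ < c / (1 - θ) := by gcongr; exact mul_lt_of_lt_one_right hc hθ1

/-- a Hölder-type function on the two-sided shift has uniformly bounded
differences of Birkhoff sums for the inverse shift over points agreeing on negative
coordinates. -/
theorem stmt4 (n : ℕ) (hn : 1 ≤ n) (θ c : ℝ) (hθ0 : 0 < θ) (hθ1 : θ < 1) (hc : 0 < c)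
    (G : (ℤ → Fin n) → ℝ)
    (hG : ∀ m : ℕ, ∀ ω ω' : ℤ → Fin n,
      (∀ i : ℤ, |i| < (m : ℤ) → ω i = ω' i) → |G ω - G ω'| ≤ c * θ ^ m) :
    ∃ K : ℝ, 0 < K ∧ ∀ N : ℕ, ∀ ω ω' : ℤ → Fin n,
      (∀ i : ℤ, i ≤ -1 → ω i = ω' i) →
      |(∑ k ∈ Finset.Icc 1 N, G ((fun ν (i : ℤ) => ν (i - 1))^[k] ω)) -
        ∑ k ∈ Finset.Icc 1 N, G ((fun ν (i : ℤ) => ν (i - 1))^[k] ω')| < K :=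
  stmt4_general n θ c hθ0 hθ1 hc G hG
end

section
/- Let X be a metric space, s > 0, and let m be a finite Borel measure on X such that for m-almost every x ∈ X, limsup_{ε→0⁺} m(B(x,ε))/ε^s = ∞, where B(x,ε) denotes the closed ball of radius ε centered at x. Then m is singular with respect to the s-dimensional Hausdorff measure H^s on X, i.e. there exists a Borel set A ⊆ X with m(X∖A) = 0 and H^s(A) = 0. -/
open MeasureTheory Metric Filter
open scoped ENNReal Topology

/-!
By Vitali's covering lemma, the points `x` with `T * ε ^ s < m (closedBall x ε)` at arbitrarily
small scales `ε ≤ δ` are covered by the 4-fold enlargements of countably many disjoint such balls,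
so the `δ`-approximations of `μH[s]` of this set are at most `8 ^ s * m univ / T`. Letting `δ → 0`
and `T → ∞` shows that the set where the upper density is infinite, which has full `m`-measure,
is `μH[s]`-null.
-/

theorem Set.PairwiseDisjoint.countable_of_measure_pos {X ι : Type*} [MeasurableSpace X]
    {μ : Measure X} [SFinite μ] {u : Set ι} {f : ι → Set X} (hu : u.PairwiseDisjoint f)
    (hf : ∀ i ∈ u, MeasurableSet (f i)) (hpos : ∀ i ∈ u, 0 < μ (f i)) : u.Countable := by
  have hcnt := Measure.countable_meas_pos_of_disjoint_iUnion (μ := μ)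
    (As := fun i : u => f i) (fun i => hf i i.2) (hu.subtype _ _)
  rw [← Set.countable_coe_iff, ← Set.countable_univ_iff]
  simpa only [fun i : u => hpos i i.2, Set.ofPred_true] using hcnt

theorem Metric.ediam_closedBall_le_ofReal {X : Type*} [PseudoMetricSpace X] (x : X) (r : ℝ) :
    ediam (closedBall x r) ≤ ENNReal.ofReal (2 * r) :=
  ediam_le_of_forall_dist_le fun a ha b hb =>
    (dist_triangle_right a b x).trans (by linarith [mem_closedBall.1 ha, mem_closedBall.1 hb])

theorem MeasureTheory.Measure.hausdorffMeasure_le_of_forall_countable_cover {X : Type*}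
    [EMetricSpace X] [MeasurableSpace X] [BorelSpace X] (s : ℝ) (E : Set X) (c : ℝ≥0∞)
    (h : ∀ ε : ℝ, 0 < ε → ∃ t : Set (Set X), t.Countable ∧ E ⊆ ⋃₀ t ∧
      (∀ v ∈ t, ediam v ≤ ENNReal.ofReal ε) ∧ ∑' v : t, ediam (v : Set X) ^ s ≤ c) :
    μH[s] E ≤ c := by
  choose t ht_cnt ht_cover ht_diam ht_sum using
    fun n : ℕ => h (1 / ((n : ℝ) + 1)) Nat.one_div_pos_of_nat
  have : ∀ n, Countable (t n) := fun n => (ht_cnt n).to_subtype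
  calc μH[s] E ≤ liminf (fun n => ∑' v : t n, ediam (v : Set X) ^ s) atTop :=
        Measure.hausdorffMeasure_le_liminf_tsum (ι := fun n => t n) s E
          (fun n : ℕ => ENNReal.ofReal (1 / ((n : ℝ) + 1)))
          (by simpa using ENNReal.tendsto_ofReal tendsto_one_div_add_atTop_nhds_zero_nat)
          (fun n v => v) (.of_forall fun n v => ht_diam n v v.2)
          (.of_forall fun n => by simpa only [Set.sUnion_eq_iUnion] using ht_cover n)
    _ ≤ c := liminf_le_of_frequently_le' (.of_forall ht_sum)

section Density

variable {X : Type*} [MetricSpace X] [MeasurableSpace X] (m : Measure X) (s : ℝ) (T : ℝ≥0∞)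

theorem frequently_mul_rpow_lt_measure_closedBall {x : X} (hT : T ≠ ⊤)
    (hx : limsup (fun ε : ℝ => m (closedBall x ε) / ENNReal.ofReal (ε ^ s)) (𝓝[>] 0) = ⊤) :
    ∃ᶠ ε in 𝓝[>] (0 : ℝ), T * ENNReal.ofReal (ε ^ s) < m (closedBall x ε) := by
  have hlt : T < limsup (fun ε : ℝ => m (closedBall x ε) / ENNReal.ofReal (ε ^ s)) (𝓝[>] 0) :=
    hx ▸ hT.lt_top
  exact (frequently_lt_of_lt_limsup (by isBoundedDefault) hlt).mono
    fun ε hε => ENNReal.mul_lt_of_lt_div hε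

theorem exists_countable_disjoint_closedBall_cover [OpensMeasurableSpace X] [SFinite m]
    {E : Set X}
    (hE : ∀ x ∈ E, ∃ᶠ ε in 𝓝[>] (0 : ℝ), T * ENNReal.ofReal (ε ^ s) < m (closedBall x ε))
    {δ : ℝ} (hδ : 0 < δ) :
    ∃ u : Set (X × ℝ), u.Countable ∧ u.PairwiseDisjoint (fun p => closedBall p.1 p.2) ∧
      (∀ p ∈ u, 0 < p.2 ∧ p.2 ≤ δ ∧ T * ENNReal.ofReal (p.2 ^ s) < m (closedBall p.1 p.2)) ∧
      E ⊆ ⋃ p ∈ u, closedBall p.1 (4 * p.2) := by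
  set F : Set (X × ℝ) := {p | p.1 ∈ E ∧ 0 < p.2 ∧ p.2 ≤ δ ∧
    T * ENNReal.ofReal (p.2 ^ s) < m (closedBall p.1 p.2)}
  obtain ⟨u, huF, hu_disj, hu_cover⟩ :=
    Vitali.exists_disjoint_subfamily_covering_enlargement_closedBall F Prod.fst Prod.snd δ
      (fun p hp => hp.2.2.1) 4 (by norm_num)
  have hu_cnt : u.Countable := hu_disj.countable_of_measure_pos (μ := m)
    (fun _ _ => measurableSet_closedBall) fun p hp => pos_of_gt (huF hp).2.2.2
  refine ⟨u, hu_cnt, hu_disj, fun p hp => (huF hp).2, fun x hx => ?_⟩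
  obtain ⟨ε, hεT, hε0, hεδ⟩ := ((hE x hx).and_eventually (Ioc_mem_nhdsGT hδ)).exists
  obtain ⟨p, hp, hsub⟩ := hu_cover (x, ε) ⟨hx, hε0, hεδ, hεT⟩
  exact Set.mem_biUnion hp (hsub (mem_closedBall_self hε0.le))

theorem tsum_ediam_closedBall_rpow_le [OpensMeasurableSpace X] [IsFiniteMeasure m] (hs : 0 ≤ s)
    {u : Set (X × ℝ)}
    (hu_cnt : u.Countable) (hu_disj : u.PairwiseDisjoint (fun p => closedBall p.1 p.2))
    (hu : ∀ p ∈ u, 0 < p.2 ∧ T * ENNReal.ofReal (p.2 ^ s) < m (closedBall p.1 p.2)) :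
    ∑' p : u, ediam (closedBall (p : X × ℝ).1 (4 * (p : X × ℝ).2)) ^ s
      ≤ ENNReal.ofReal (8 ^ s) * m Set.univ / T := by
  have hterm : ∀ p : u, ediam (closedBall (p : X × ℝ).1 (4 * (p : X × ℝ).2)) ^ s
      ≤ ENNReal.ofReal (8 ^ s) * (m (closedBall (p : X × ℝ).1 (p : X × ℝ).2) / T) := by
    rintro ⟨⟨x, r⟩, hp⟩
    obtain ⟨hr, hT⟩ := hu _ hp
    have hrs : ENNReal.ofReal (r ^ s) ≤ m (closedBall x r) / T :=
      ENNReal.le_div_iff_mul_le (.inr (pos_of_gt hT).ne') (.inr (measure_ne_top _ _))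
        |>.2 (mul_comm T _ ▸ hT.le)
    calc ediam (closedBall x (4 * r)) ^ s ≤ ENNReal.ofReal (8 * r) ^ s := by
          rw [show 8 * r = 2 * (4 * r) by ring]
          gcongr
          exact ediam_closedBall_le_ofReal x _
      _ = ENNReal.ofReal (8 ^ s) * ENNReal.ofReal (r ^ s) := by
          rw [ENNReal.ofReal_rpow_of_nonneg (by positivity) hs, Real.mul_rpow (by norm_num) hr.le,
            ENNReal.ofReal_mul (by positivity)]
      _ ≤ ENNReal.ofReal (8 ^ s) * (m (closedBall x r) / T) := by gcongr
  calc ∑' p : u, ediam (closedBall (p : X × ℝ).1 (4 * (p : X × ℝ).2)) ^ s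
      ≤ ∑' p : u, ENNReal.ofReal (8 ^ s) * (m (closedBall (p : X × ℝ).1 (p : X × ℝ).2) / T) :=
        ENNReal.tsum_le_tsum hterm
    _ = ENNReal.ofReal (8 ^ s) * m (⋃ p ∈ u, closedBall p.1 p.2) / T := by
        rw [measure_biUnion hu_cnt hu_disj fun _ _ => measurableSet_closedBall,
          ENNReal.tsum_mul_left, mul_div_assoc]
        simp only [div_eq_mul_inv, ENNReal.tsum_mul_right]
    _ ≤ ENNReal.ofReal (8 ^ s) * m Set.univ / T := by gcongr; exact Set.subset_univ _

theorem hausdorffMeasure_le_of_frequently_mul_rpow_lt [BorelSpace X] [IsFiniteMeasure m]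
    (hs : 0 ≤ s) {E : Set X}
    (hE : ∀ x ∈ E, ∃ᶠ ε in 𝓝[>] (0 : ℝ), T * ENNReal.ofReal (ε ^ s) < m (closedBall x ε)) :
    μH[s] E ≤ ENNReal.ofReal (8 ^ s) * m Set.univ / T := by
  refine Measure.hausdorffMeasure_le_of_forall_countable_cover s E _ fun ε hε => ?_
  obtain ⟨u, hu_cnt, hu_disj, hu, hE_sub⟩ :=
    exists_countable_disjoint_closedBall_cover m s T hE (show 0 < ε / 8 by positivity)
  refine ⟨(fun p => closedBall p.1 (4 * p.2)) '' u, hu_cnt.image _, ?_, ?_, ?_⟩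
  · rwa [Set.sUnion_image]
  · rintro _ ⟨p, hp, rfl⟩
    grw [ediam_closedBall_le_ofReal]
    exact ENNReal.ofReal_le_ofReal (by linarith [(hu p hp).2.1])
  · refine (ENNReal.tsum_le_tsum_comp_of_surjective
      (Set.imageFactorization_surjective (f := fun p : X × ℝ => closedBall p.1 (4 * p.2)) (s := u))
      fun v => ediam (v : Set X) ^ s).trans ?_
    exact tsum_ediam_closedBall_rpow_le m s T hs hu_cnt hu_disj fun p hp =>
      ⟨(hu p hp).1, (hu p hp).2.2⟩

end Density

/-- if the upper `s`-density of a finite Borel measure is infinite almost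
everywhere, then the measure is singular with respect to the `s`-dimensional Hausdorff
measure. -/
theorem stmt7 {X : Type*} [MetricSpace X] [MeasurableSpace X] [BorelSpace X]
    (s : ℝ) (hs : 0 < s) (m : Measure X) [IsFiniteMeasure m]
    (h : ∀ᵐ x ∂m,
      Filter.limsup (fun ε : ℝ => m (closedBall x ε) / ENNReal.ofReal (ε ^ s))
        (nhdsWithin 0 (Set.Ioi 0)) = ⊤) :
    ∃ A : Set X, MeasurableSet A ∧ m Aᶜ = 0 ∧ μH[s] A = 0 := by
  set E := {x | limsup (fun ε : ℝ => m (closedBall x ε) / ENNReal.ofReal (ε ^ s)) (𝓝[>] 0) = ⊤}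
  have hmE : m Eᶜ = 0 := ae_iff.1 h
  set C := ENNReal.ofReal (8 ^ s) * m Set.univ
  have hbound (n : ℕ) : μH[s] E ≤ C / n :=
    hausdorffMeasure_le_of_frequently_mul_rpow_lt m s n hs.le fun _ hx =>
      frequently_mul_rpow_lt_measure_closedBall m s n (ENNReal.natCast_ne_top n) hx
  have hC_div : Tendsto (fun n : ℕ => C / n) atTop (𝓝 0) := by
    simpa only [div_eq_mul_inv, mul_zero] using
      ENNReal.Tendsto.const_mul ENNReal.tendsto_inv_nat_nhds_zero
        (.inr (ENNReal.mul_ne_top ENNReal.ofReal_ne_top (measure_ne_top m _)))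
  have hE : μH[s] E = 0 := nonpos_iff_eq_zero.1 (ge_of_tendsto' hC_div hbound)
  exact ⟨toMeasurable μH[s] E, measurableSet_toMeasurable _ _,
    measure_mono_null (Set.compl_subset_compl.2 (subset_toMeasurable _ _)) hmE,
    by rwa [measure_toMeasurable]⟩
end
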